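/- Let κ be a coloring of the m×n array, and let J_1 be a nonempty set of columns such that: the restriction of κ to (all rows) × J_1 is a Latin rectangle using exactly two colors R and B, with every row of this block containing exactly ρ·|J_1| entries of color R where 0 < ρ < 1; and κ takes a single third color Y on all entries of (all rows) × J_1ᶜ. Then every matrix z ∈ Δ_κ ∩ V_d, with common values z_R, z_B, z_Y on the color classes R, B, Y respectively, satisfies z_Y = 0 (when J_1ᶜ is nonempty) and z_B = −(ρ/(1−ρ))·z_R. -/

import Mathlib

open Finset

/-- `V_d`: matrices all of whose row sums and all of whose column sums are `0`. -/
def Vd (m n : ℕ) : Submodule ℝ (Fin m → Fin n → ℝ) where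
  carrier := {z | (∀ i, ∑ j, z i j = 0) ∧ (∀ j, ∑ i, z i j = 0)}
  add_mem' := by
    rintro a b ⟨ha1, ha2⟩ ⟨hb1, hb2⟩
    constructor
    · intro i
      simp only [Pi.add_apply, Finset.sum_add_distrib, ha1 i, hb1 i, add_zero]
    · intro j
      simp only [Pi.add_apply, Finset.sum_add_distrib, ha2 j, hb2 j, add_zero]
  zero_mem' := by constructor <;> intro _ <;> simp
  smul_mem' := by
    rintro c a ⟨h1, h2⟩
    constructor
    · intro i
      simp only [Pi.smul_apply, smul_eq_mul, ← Finset.mul_sum, h1 i, mul_zero]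
    · intro j
      simp only [Pi.smul_apply, smul_eq_mul, ← Finset.mul_sum, h2 j, mul_zero]

/-- The synchrony subspace `Δ_κ` of a coloring `κ`, as a submodule: matrices constant
on each color class. -/
def synchronyMod {m n : ℕ} {X : Type*} (κ : Fin m → Fin n → X) :
    Submodule ℝ (Fin m → Fin n → ℝ) where
  carrier := {z | ∀ i j k l, κ i j = κ k l → z i j = z k l}
  add_mem' := by
    intro a b ha hb i j k l h
    simp only [Pi.add_apply]
    rw [ha i j k l h, hb i j k l h]
  zero_mem' := by intro i j k l _; rfl
  smul_mem' := by
    intro c a ha i j k l h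
    simp only [Pi.smul_apply, smul_eq_mul]
    rw [ha i j k l h]

/-- The restriction of `κ` to the block `Rs × Cs` is a Latin rectangle. -/
def LatinOn {m n : ℕ} {X : Type*} [DecidableEq X] (κ : Fin m → Fin n → X)
    (Rs : Finset (Fin m)) (Cs : Finset (Fin n)) : Prop :=
  (∀ (c : X), ∀ i ∈ Rs, ∀ i' ∈ Rs,
    (Cs.filter (fun j => κ i j = c)).card = (Cs.filter (fun j => κ i' j = c)).card) ∧
  (∀ (c : X), ∀ j ∈ Cs, ∀ j' ∈ Cs,
    (Rs.filter (fun i => κ i j = c)).card = (Rs.filter (fun i => κ i j' = c)).card)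

/-
A column outside `J₁` is constant `z_Y` and sums to `0`, so `z_Y = 0` and every row sum
reduces to its part over `J₁`. In a row, `J₁` holds `ρ|J₁|` entries `z_R` and `(1 - ρ)|J₁|`
entries `z_B`, so `ρ z_R + (1 - ρ) z_B = 0`.
-/

theorem Finset.sum_eq_card_mul_of_two_valued {ι K : Type*} [CommRing K] (s : Finset ι)
    (p : ι → Prop) [DecidablePred p] (f : ι → K) (a b ρ : K)
    (hcard : ((s.filter p).card : K) = ρ * s.card)
    (ha : ∀ x ∈ s, p x → f x = a) (hb : ∀ x ∈ s, ¬p x → f x = b) :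
    ∑ x ∈ s, f x = s.card * (ρ * a + (1 - ρ) * b) := by
  have hsum_a : ∑ x ∈ s.filter p, f x = (s.filter p).card * a := by
    rw [sum_eq_card_nsmul fun x hx => ha x (mem_filter.mp hx).1 (mem_filter.mp hx).2,
      nsmul_eq_mul]
  have hsum_b : ∑ x ∈ s.filter (¬p ·), f x = (s.filter (¬p ·)).card * b := by
    rw [sum_eq_card_nsmul fun x hx => hb x (mem_filter.mp hx).1 (mem_filter.mp hx).2,
      nsmul_eq_mul]
  have hcard_not : ((s.filter (¬p ·)).card : K) = (1 - ρ) * s.card := by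
    rw [sub_mul, one_mul, ← hcard, ← card_filter_add_card_filter_not (s := s) p, Nat.cast_add,
      add_sub_cancel_left]
  rw [← sum_filter_add_sum_filter_not s p, hsum_a, hsum_b, hcard, hcard_not]
  ring

theorem Vd.eq_zero_of_col_const {m n : ℕ} (hm : 1 ≤ m) {z : Fin m → Fin n → ℝ}
    (hz : z ∈ Vd m n) {j : Fin n} {c : ℝ} (hc : ∀ i, z i j = c) : c = 0 := by
  have hcol : ∑ i, z i j = 0 := hz.2 j
  simp only [hc, sum_const, card_univ, Fintype.card_fin, nsmul_eq_mul] at hcol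
  exact (mul_eq_zero.mp hcol).resolve_left (Nat.cast_ne_zero.mpr (by omega))

theorem latin_block_values_general (m n : ℕ) (hm : 1 ≤ m)
    {X : Type*} [DecidableEq X] (κ : Fin m → Fin n → X)
    (J₁ : Finset (Fin n)) (hJ₁ : J₁.Nonempty)
    (R B Y : X)
    (ρ : ℝ) (hρ1 : ρ < 1)
    (htwo : ∀ i : Fin m, ∀ j ∈ J₁, κ i j = R ∨ κ i j = B)
    (hrowcount : ∀ i : Fin m,
      ((J₁.filter (fun j => κ i j = R)).card : ℝ) = ρ * (J₁.card : ℝ))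
    (hY : ∀ i : Fin m, ∀ j ∈ J₁ᶜ, κ i j = Y)
    (z : Fin m → Fin n → ℝ) (hz : z ∈ synchronyMod κ ⊓ Vd m n)
    (zR zB zY : ℝ)
    (hzR : ∀ i j, κ i j = R → z i j = zR)
    (hzB : ∀ i j, κ i j = B → z i j = zB)
    (hzY : ∀ i j, κ i j = Y → z i j = zY) :
    (J₁ᶜ.Nonempty → zY = 0) ∧ zB = -(ρ / (1 - ρ)) * zR := by
  have hVd : z ∈ Vd m n := hz.2
  have hzY0 : J₁ᶜ.Nonempty → zY = 0 := fun ⟨j, hj⟩ =>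
    Vd.eq_zero_of_col_const hm hVd fun i => hzY i j (hY i j hj)
  refine ⟨hzY0, ?_⟩
  let i₀ : Fin m := ⟨0, hm⟩
  have hcompl : ∑ j ∈ J₁ᶜ, z i₀ j = 0 :=
    sum_eq_zero fun j hj => (hzY i₀ j (hY i₀ j hj)).trans (hzY0 ⟨j, hj⟩)
  have hblock : ∑ j ∈ J₁, z i₀ j = 0 := by
    linarith [sum_add_sum_compl J₁ (z i₀), hVd.1 i₀]
  rw [sum_eq_card_mul_of_two_valued J₁ (κ i₀ · = R) (z i₀) zR zB ρ (hrowcount i₀)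
    (fun j _ => hzR i₀ j) (fun j hj hR => hzB i₀ j ((htwo i₀ j hj).resolve_left hR))]
    at hblock
  have hbalance : ρ * zR + (1 - ρ) * zB = 0 :=
    (mul_eq_zero.mp hblock).resolve_left (Nat.cast_ne_zero.mpr hJ₁.card_pos.ne')
  have h1ρ : 1 - ρ ≠ 0 := by linarith
  field_simp
  linarith

/-- for a coloring consisting of a two-color Latin rectangle on the columns
`J₁` (with a fraction `ρ` of `R`-entries in every row) and a third color `Y` on the
remaining columns, every `z ∈ Δ_κ ∩ V_d` has `z_Y = 0` (when `J₁ᶜ ≠ ∅`) and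
`z_B = −(ρ/(1−ρ)) z_R`. -/
theorem latin_block_values (m n : ℕ) (hm : 1 ≤ m) (hn : 1 ≤ n)
    {X : Type*} [DecidableEq X] (κ : Fin m → Fin n → X)
    (J₁ : Finset (Fin n)) (hJ₁ : J₁.Nonempty)
    (R B Y : X) (hRB : R ≠ B) (hYR : Y ≠ R) (hYB : Y ≠ B)
    (ρ : ℝ) (hρ0 : 0 < ρ) (hρ1 : ρ < 1)
    (htwo : ∀ i : Fin m, ∀ j ∈ J₁, κ i j = R ∨ κ i j = B)
    (hlatin : LatinOn κ Finset.univ J₁)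
    (hrowcount : ∀ i : Fin m,
      ((J₁.filter (fun j => κ i j = R)).card : ℝ) = ρ * (J₁.card : ℝ))
    (hY : ∀ i : Fin m, ∀ j ∈ J₁ᶜ, κ i j = Y)
    (z : Fin m → Fin n → ℝ) (hz : z ∈ synchronyMod κ ⊓ Vd m n)
    (zR zB zY : ℝ)
    (hzR : ∀ i j, κ i j = R → z i j = zR)
    (hzB : ∀ i j, κ i j = B → z i j = zB)
    (hzY : ∀ i j, κ i j = Y → z i j = zY) :
    (J₁ᶜ.Nonempty → zY = 0) ∧ zB = -(ρ / (1 - ρ)) * zR :=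
  latin_block_values_general m n hm κ J₁ hJ₁ R B Y ρ hρ1 htwo hrowcount hY z hz zR zB zY hzR hzB hzY
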